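/- Let G be a finite graph, v a vertex such that N(v) is an independent set, D* a set of vertices, S = a subset of N(v) disjoint from N[D*] with v ∉ N[D*], and let X be an inclusion-wise minimal set dominating S ∪ {v} with v ∉ X. Then either X minimally dominates S, or there exists u ∈ N(v) ∩ X such that X \ {u} is an inclusion-wise minimal dominating set of S \ {u}. -/

import Mathlib

open Set

variable {V : Type*}

/-- The closed neighborhood of a set of vertices: `N[X]`. -/
def closedNbhd (G : SimpleGraph V) (X : Set V) : Set V :=
  {y | ∃ x ∈ X, y = x ∨ G.Adj x y}

/-- `X` dominates `A` in `G`: `A ⊆ N[X]`. -/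
def Dominates (G : SimpleGraph V) (X A : Set V) : Prop :=
  A ⊆ closedNbhd G X

/-- `X` is an inclusion-wise minimal set dominating `A` in `G`. -/
def MinDom (G : SimpleGraph V) (X A : Set V) : Prop :=
  Dominates G X A ∧ ∀ Y, Y ⊂ X → ¬ Dominates G Y A

/-- `S` is an independent set in `G`. -/
def IndepSet (G : SimpleGraph V) (S : Set V) : Prop :=
  S.Pairwise fun x y => ¬ G.Adj x y

section Domination

variable {G : SimpleGraph V} {X Y A B T : Set V} {x v : V}

lemma closedNbhd_mono (h : X ⊆ Y) : closedNbhd G X ⊆ closedNbhd G Y := by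
  rintro z ⟨x, hx, hz⟩
  exact ⟨x, h hx, hz⟩

lemma mem_closedNbhd_singleton {y : V} : y ∈ closedNbhd G {x} ↔ y = x ∨ G.Adj x y := by
  simp [closedNbhd]

lemma Dominates.mono (h : Dominates G X A) (hXY : X ⊆ Y) (hBA : B ⊆ A) : Dominates G Y B :=
  hBA.trans (h.trans (closedNbhd_mono hXY))

lemma minDom_iff :
    MinDom G X A ↔ Dominates G X A ∧ ∀ x ∈ X, ¬ Dominates G (X \ {x}) A := by
  refine ⟨fun h => ⟨h.1, fun x hx => h.2 _ (sdiff_singleton_ssubset.2 hx)⟩, ?_⟩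
  rintro ⟨hdom, hmin⟩
  refine ⟨hdom, fun Y hY hYdom => ?_⟩
  obtain ⟨a, haX, haY⟩ := not_subset.1 hY.2
  exact hmin a haX (hYdom.mono (subset_sdiff_singleton hY.1 haY) subset_rfl)

/-- Minimality forces `x` to be the only vertex of `X` dominating `v`, and `x ≠ v` as `v ∉ X`. -/
lemma MinDom.adj_of_dominates_diff (hX : MinDom G X (A ∪ {v})) (hvX : v ∉ X) (hxX : x ∈ X)
    (hA : Dominates G (X \ {x}) A) : G.Adj x v := by
  have hv : v ∉ closedNbhd G (X \ {x}) := fun hv =>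
    (minDom_iff.1 hX).2 x hxX (union_subset hA (singleton_subset_iff.2 hv))
  obtain ⟨w, hwX, hwv⟩ := hX.1 (mem_union_right A rfl)
  obtain rfl : w = x := by
    by_contra hne
    exact hv ⟨w, ⟨hwX, hne⟩, hwv⟩
  rcases hwv with rfl | hadj
  · exact absurd hwX hvX
  · exact hadj

/-- A smaller dominating set `(X \ {x}) \ {y}` of `A \ {x}` would, together with `x`,
dominate all of `T`, contradicting the minimality of `X`. -/
lemma MinDom.diff_singleton (hX : MinDom G X T) (hxX : x ∈ X)
    (hT : T ⊆ A ∪ closedNbhd G {x}) (hA : Dominates G (X \ {x}) (A \ {x})) :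
    MinDom G (X \ {x}) (A \ {x}) := by
  refine minDom_iff.2 ⟨hA, fun y hy hdom => (minDom_iff.1 hX).2 y hy.1 fun t ht => ?_⟩
  have hxy : x ∈ X \ {y} := ⟨hxX, fun h => hy.2 (mem_singleton_iff.1 h).symm⟩
  by_cases htx : t ∈ closedNbhd G {x}
  · exact closedNbhd_mono (singleton_subset_iff.2 hxy) htx
  · have htA : t ∈ A \ {x} :=
      ⟨(hT ht).resolve_right htx, fun h => htx (mem_closedNbhd_singleton.2 (Or.inl h))⟩
    exact closedNbhd_mono (sdiff_subset_sdiff_left sdiff_subset) (hdom htA)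

end Domination

theorem stmt_7_general (G : SimpleGraph V) (v : V) (S X : Set V)
    (hX : MinDom G X (S ∪ {v})) (hvX : v ∉ X) :
    MinDom G X S ∨
      ∃ u ∈ G.neighborSet v ∩ X, MinDom G (X \ {u}) (S \ {u}) := by
  by_cases h : ∃ x ∈ X, Dominates G (X \ {x}) S
  · obtain ⟨x, hxX, hdom⟩ := h
    have hadj : G.Adj x v := hX.adj_of_dominates_diff hvX hxX hdom
    refine Or.inr ⟨x, ⟨hadj.symm, hxX⟩, hX.diff_singleton hxX ?_ (hdom.mono subset_rfl sdiff_subset)⟩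
    exact union_subset_union_right S
      (singleton_subset_iff.2 (mem_closedNbhd_singleton.2 (Or.inr hadj)))
  · push Not at h
    exact Or.inl (minDom_iff.2 ⟨hX.1.mono subset_rfl subset_union_left, h⟩)

theorem stmt_7 [Fintype V] (G : SimpleGraph V) (v : V) (Dstar S X : Set V)
    (hind : IndepSet G (G.neighborSet v))
    (hS : S ⊆ G.neighborSet v)
    (hSD : S ∩ closedNbhd G Dstar = ∅)
    (hv : v ∉ closedNbhd G Dstar)
    (hX : MinDom G X (S ∪ {v})) (hvX : v ∉ X) :
    MinDom G X S ∨
      ∃ u ∈ G.neighborSet v ∩ X, MinDom G (X \ {u}) (S \ {u}) :=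
  stmt_7_general G v S X hX hvX
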